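/- Fix h, w ∈ ℕ. For each pixel (i,j) with 1 ≤ i ≤ h, 1 ≤ j ≤ w, let α_{ij}, β_{ij} > 0, μ_{s,ij} ∈ ℝ, σ_{s,ij} > 0, and set μ_{ω,ij} = α_{ij}/β_{ij} and E_{ij}[log ω] = ∫_{(0,∞)} log ω dGamma(α_{ij}, β_{ij})(ω). Then Σ_{i,j} ∫_{(0,∞)} KL(N(μ_{s,ij}, σ_{s,ij}²) ‖ N(0, ω^{-1})) dGamma(α_{ij}, β_{ij})(ω) = (1/2) Σ_{i,j} [ μ_{ω,ij}·(μ_{s,ij}² + σ_{s,ij}²) − log σ_{s,ij}² − 1 − E_{ij}[log ω] ]. In particular, this expectation equals the sparsity loss term ℓ_sparse of the paper's Eq. (29) up to an additive constant that does not depend on the Gaussian parameters μ_S, σ_S. -/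

import Mathlib

open MeasureTheory ProbabilityTheory
open scoped ENNReal NNReal

/- Kullback–Leibler divergence `KL(q‖p)`, valued in `[0,∞]`:
`∫ log (dq/dp) dq` if `q ≪ p` and the log-density is `q`-integrable, and `+∞` otherwise. -/
open Classical in
noncomputable def klDiv {Ω : Type*} [MeasurableSpace Ω] (q p : Measure Ω) : ℝ≥0∞ :=
  if q ≪ p ∧ Integrable (llr q p) q then ENNReal.ofReal (∫ x, llr q p x ∂q) else ⊤

/- `KL(N(μ, σ²) ‖ N(0, ω⁻¹))` as a real number, where `N` is the real Gaussian measure. -/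
noncomputable def gaussKL (μ σ ω : ℝ) : ℝ :=
  (klDiv (gaussianReal μ (Real.toNNReal (σ ^ 2))) (gaussianReal 0 (Real.toNNReal ω⁻¹))).toReal

open Real Set

/-! The log-likelihood ratio of two Gaussians is a quadratic polynomial in `x`, so integrating it
against `N(μ, v)` needs only the first two Gaussian moments and gives the classical formula
`KL(N(μ, v) ‖ N(m, u)) = (log (u / v) - 1 + (v + (μ - m)²) / u) / 2`. For `v = σ²`, `m = 0`,
`u = ω⁻¹` this is affine in `ω` and `log ω`, so its expectation under `Gamma(α, β)` needs only the
mean `α / β` and the integrability of `log ω`. Both follow from `E[ω ^ s] = Γ(α + s) / (Γ(α) β ^ s)`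
for `s > -α`, which holds because `ω ^ s` times the `Gamma(α, β)` density is a multiple of the
`Gamma(α + s, β)` density; `|log ω|` is dominated by `ω ^ ε + ω ^ (-ε)`. -/

section Gaussian

variable {v u : ℝ≥0}

lemma integrable_sub_sq_gaussianReal (μ m : ℝ) (v : ℝ≥0) :
    Integrable (fun x => (x - m) ^ 2) (gaussianReal μ v) :=
  ((memLp_id_gaussianReal 2).sub (memLp_const m)).integrable_sq

lemma integral_sub_sq_gaussianReal (μ m : ℝ) (v : ℝ≥0) :
    ∫ x, (x - m) ^ 2 ∂gaussianReal μ v = v + (μ - m) ^ 2 := by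
  have hsub : MemLp (fun x => x - m) 2 (gaussianReal μ v) :=
    (memLp_id_gaussianReal 2).sub (memLp_const m)
  have hmean : ∫ x, (x - m) ∂gaussianReal μ v = μ - m := by
    have hid : Integrable (fun x => x) (gaussianReal μ v) :=
      (memLp_id_gaussianReal 2).integrable one_le_two
    rw [integral_sub hid (integrable_const m),
      integral_id_gaussianReal, integral_const, probReal_univ, one_smul]
  have hvar := variance_eq_sub hsub
  rw [variance_sub_const (by fun_prop), variance_fun_id_gaussianReal, hmean] at hvar
  simp only [Pi.pow_apply] at hvar
  linarith

lemma log_gaussianPDFReal (μ : ℝ) (hv : v ≠ 0) (x : ℝ) :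
    log (gaussianPDFReal μ v x) = -log (2 * π * v) / 2 - (x - μ) ^ 2 / (2 * v) := by
  have hv' : (0 : ℝ) < v := by positivity
  rw [gaussianPDFReal, log_mul (by positivity) (exp_ne_zero _), log_inv, log_sqrt (by positivity),
    log_exp]
  ring

lemma llr_gaussianReal (μ m : ℝ) (hv : v ≠ 0) (hu : u ≠ 0) :
    llr (gaussianReal μ v) (gaussianReal m u) =ᵐ[gaussianReal μ v]
      fun x => log (u / v) / 2 - (x - μ) ^ 2 / (2 * v) + (x - m) ^ 2 / (2 * u) := by
  have hμ := gaussianReal_absolutelyContinuous μ hv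
  have hν := gaussianReal_absolutelyContinuous m hu
  have hμν : gaussianReal μ v ≪ gaussianReal m u :=
    hμ.trans (gaussianReal_absolutelyContinuous' m hu)
  filter_upwards [hμν (Measure.rnDeriv_eq_div hμ hν), hμ (rnDeriv_gaussianReal μ v),
    hμ (rnDeriv_gaussianReal m u)] with x hdiv hpdfμ hpdfν
  have hv' : (0 : ℝ) < v := by positivity
  have hu' : (0 : ℝ) < u := by positivity
  rw [llr_def]
  beta_reduce
  rw [hdiv, hpdfμ, hpdfν, ENNReal.toReal_div, toReal_gaussianPDF, toReal_gaussianPDF,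
    log_div (gaussianPDFReal_pos _ _ _ hv).ne' (gaussianPDFReal_pos _ _ _ hu).ne',
    log_gaussianPDFReal μ hv, log_gaussianPDFReal m hu, log_div hu'.ne' hv'.ne',
    log_mul (by positivity) hv'.ne', log_mul (by positivity) hu'.ne']
  ring

lemma integrable_llr_gaussianReal (μ m : ℝ) (hv : v ≠ 0) (hu : u ≠ 0) :
    Integrable (llr (gaussianReal μ v) (gaussianReal m u)) (gaussianReal μ v) :=
  (((integrable_const _).sub ((integrable_sub_sq_gaussianReal μ μ v).div_const _)).add
    ((integrable_sub_sq_gaussianReal μ m v).div_const _)).congr (llr_gaussianReal μ m hv hu).symm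

lemma integral_llr_gaussianReal (μ m : ℝ) (hv : v ≠ 0) (hu : u ≠ 0) :
    ∫ x, llr (gaussianReal μ v) (gaussianReal m u) x ∂gaussianReal μ v
      = (log (u / v) - 1 + (v + (μ - m) ^ 2) / u) / 2 := by
  have hv' : (0 : ℝ) < v := by positivity
  have hμ := (integrable_sub_sq_gaussianReal μ μ v).div_const (2 * (v : ℝ))
  have hm := (integrable_sub_sq_gaussianReal μ m v).div_const (2 * (u : ℝ))
  rw [integral_congr_ae (llr_gaussianReal μ m hv hu),
    integral_add (f := fun x => log (u / v : ℝ) / 2 - (x - μ) ^ 2 / (2 * v))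
      ((integrable_const _).sub hμ) hm, integral_sub (integrable_const _) hμ]
  simp only [integral_div, integral_sub_sq_gaussianReal, integral_const, probReal_univ, one_smul]
  field_simp
  ring

lemma toReal_klDiv_gaussianReal (μ m : ℝ) (hv : v ≠ 0) (hu : u ≠ 0) :
    (klDiv (gaussianReal μ v) (gaussianReal m u)).toReal
      = (log (u / v) - 1 + (v + (μ - m) ^ 2) / u) / 2 := by
  have hv' : (0 : ℝ) < v := by positivity
  have hu' : (0 : ℝ) < u := by positivity
  have hac : gaussianReal μ v ≪ gaussianReal m u :=
    (gaussianReal_absolutelyContinuous μ hv).trans (gaussianReal_absolutelyContinuous' m hu)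
  have hnonneg : 0 ≤ (log (u / v) - 1 + (v + (μ - m) ^ 2) / u) / 2 := by
    have hlog := log_le_sub_one_of_pos (show (0 : ℝ) < v / u by positivity)
    have hswap : log (u / v : ℝ) = -log (v / u) := by rw [← log_inv, inv_div]
    have : 0 ≤ (μ - m) ^ 2 / u := by positivity
    rw [hswap, add_div (v : ℝ)]
    linarith
  rw [klDiv, if_pos ⟨hac, integrable_llr_gaussianReal μ m hv hu⟩,
    integral_llr_gaussianReal μ m hv hu, ENNReal.toReal_ofReal hnonneg]

end Gaussian

lemma gaussKL_eq {μ σ ω : ℝ} (hσ : σ ≠ 0) (hω : 0 < ω) :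
    gaussKL μ σ ω = 1 / 2 * (ω * (μ ^ 2 + σ ^ 2) - log (σ ^ 2) - 1 - log ω) := by
  have hσ2 : 0 < σ ^ 2 := by positivity
  rw [gaussKL, toReal_klDiv_gaussianReal μ 0 (Real.toNNReal_pos.2 hσ2).ne'
      (Real.toNNReal_pos.2 (inv_pos.2 hω)).ne',
    Real.coe_toNNReal _ hσ2.le, Real.coe_toNNReal _ (inv_nonneg.2 hω.le),
    log_div (inv_ne_zero hω.ne') hσ2.ne', log_inv]
  field_simp
  ring

section Gamma

variable {a r s : ℝ}

lemma measurable_gammaPDF (a r : ℝ) : Measurable (gammaPDF a r) :=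
  (measurable_gammaPDFReal a r).ennreal_ofReal

lemma ae_pos_gammaMeasure (a r : ℝ) : ∀ᵐ x ∂gammaMeasure a r, 0 < x := by
  rw [gammaMeasure, ae_withDensity_iff (measurable_gammaPDF a r)]
  filter_upwards [Measure.ae_ne volume 0] with x hx hpdf
  exact hx.lt_or_gt.resolve_left fun hneg => hpdf (gammaPDF_of_neg hneg)

lemma integral_gammaMeasure (ha : 0 < a) (hr : 0 < r) (f : ℝ → ℝ) :
    ∫ x, f x ∂gammaMeasure a r = ∫ x, gammaPDFReal a r x * f x := by
  rw [gammaMeasure, integral_withDensity_eq_integral_toReal_smul (measurable_gammaPDF a r)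
    (ae_of_all _ fun _ => ENNReal.ofReal_lt_top)]
  simp only [gammaPDF, ENNReal.toReal_ofReal (gammaPDFReal_nonneg ha hr _), smul_eq_mul]

lemma integrable_gammaMeasure_iff (ha : 0 < a) (hr : 0 < r) {f : ℝ → ℝ} :
    Integrable f (gammaMeasure a r) ↔ Integrable (fun x => gammaPDFReal a r x * f x) := by
  rw [gammaMeasure, integrable_withDensity_iff_integrable_smul'
    (measurable_gammaPDF a r) (ae_of_all _ fun _ => ENNReal.ofReal_lt_top)]
  simp only [gammaPDF, ENNReal.toReal_ofReal (gammaPDFReal_nonneg ha hr _), smul_eq_mul]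

lemma integrable_gammaPDFReal (ha : 0 < a) (hr : 0 < r) : Integrable (gammaPDFReal a r) := by
  have := isProbabilityMeasure_gammaMeasure ha hr
  simpa using (integrable_gammaMeasure_iff ha hr).1 (integrable_const (1 : ℝ))

lemma integral_gammaPDFReal (ha : 0 < a) (hr : 0 < r) : ∫ x, gammaPDFReal a r x = 1 := by
  have := isProbabilityMeasure_gammaMeasure ha hr
  simpa using (integral_gammaMeasure ha hr fun _ => 1).symm

-- At `x = 0` this can fail, since `0 ^ 0 = 1`.
lemma gammaPDFReal_mul_rpow (hr : 0 < r) (has : 0 < a + s) {x : ℝ} (hx : x ≠ 0) :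
    gammaPDFReal a r x * x ^ s
      = Gamma (a + s) / (Gamma a * r ^ s) * gammaPDFReal (a + s) r x := by
  rcases hx.lt_or_gt with hneg | hpos
  · simp [gammaPDFReal, not_le.2 hneg]
  have hΓ := (Gamma_pos_of_pos has).ne'
  simp only [gammaPDFReal, if_pos hpos.le, rpow_add hr]
  rw [show a + s - 1 = a - 1 + s by ring, rpow_add hpos]
  field_simp

lemma integrable_rpow_gammaMeasure (ha : 0 < a) (hr : 0 < r) (has : 0 < a + s) :
    Integrable (fun x => x ^ s) (gammaMeasure a r) := by
  rw [integrable_gammaMeasure_iff ha hr]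
  refine ((integrable_gammaPDFReal has hr).const_mul (Gamma (a + s) / (Gamma a * r ^ s))).congr ?_
  filter_upwards [Measure.ae_ne volume 0] with x hx
  exact (gammaPDFReal_mul_rpow hr has hx).symm

lemma integral_rpow_gammaMeasure (ha : 0 < a) (hr : 0 < r) (has : 0 < a + s) :
    ∫ x, x ^ s ∂gammaMeasure a r = Gamma (a + s) / (Gamma a * r ^ s) := by
  rw [integral_gammaMeasure ha hr, integral_congr_ae ?_, integral_const_mul,
    integral_gammaPDFReal has hr, mul_one]
  filter_upwards [Measure.ae_ne volume 0] with x hx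
  exact gammaPDFReal_mul_rpow hr has hx

lemma integrable_id_gammaMeasure (ha : 0 < a) (hr : 0 < r) :
    Integrable (fun x => x) (gammaMeasure a r) := by
  simpa using integrable_rpow_gammaMeasure (s := 1) ha hr (by linarith)

lemma integral_id_gammaMeasure (ha : 0 < a) (hr : 0 < r) :
    ∫ x, x ∂gammaMeasure a r = a / r := by
  have h := integral_rpow_gammaMeasure (s := 1) ha hr (by linarith)
  simp only [rpow_one, Gamma_add_one ha.ne'] at h
  rw [h]
  field_simp [(Gamma_pos_of_pos ha).ne']

lemma abs_log_le_rpow_add_rpow_neg {x ε : ℝ} (hx : 0 < x) (hε : 0 < ε) :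
    |log x| ≤ (x ^ ε + x ^ (-ε)) / ε := by
  have hpos := log_le_rpow_div hx.le hε
  have hneg := log_le_rpow_div (inv_pos.2 hx).le hε
  rw [log_inv, inv_rpow hx.le, ← rpow_neg hx.le] at hneg
  rw [add_div, abs_le]
  constructor <;> linarith [div_nonneg (rpow_nonneg hx.le ε) hε.le,
    div_nonneg (rpow_nonneg hx.le (-ε)) hε.le]

lemma integrable_log_gammaMeasure (ha : 0 < a) (hr : 0 < r) :
    Integrable log (gammaMeasure a r) := by
  have hbound := ((integrable_rpow_gammaMeasure ha hr (s := a / 2) (by linarith)).add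
    (integrable_rpow_gammaMeasure ha hr (s := -(a / 2)) (by linarith))).div_const (a / 2)
  refine hbound.mono' measurable_log.aestronglyMeasurable ?_
  filter_upwards [ae_pos_gammaMeasure a r] with x hx
  exact abs_log_le_rpow_add_rpow_neg hx (by linarith)

end Gamma

lemma integral_gaussKL_gammaMeasure {a r μ σ : ℝ} (ha : 0 < a) (hr : 0 < r) (hσ : σ ≠ 0) :
    ∫ ω, gaussKL μ σ ω ∂gammaMeasure a r
      = 1 / 2 * (a / r * (μ ^ 2 + σ ^ 2) - log (σ ^ 2) - 1 - ∫ ω, log ω ∂gammaMeasure a r) := by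
  have := isProbabilityMeasure_gammaMeasure ha hr
  have hid : Integrable (fun ω => ω * (μ ^ 2 + σ ^ 2)) (gammaMeasure a r) :=
    (integrable_id_gammaMeasure ha hr).mul_const _
  have hid' : Integrable (fun ω => ω * (μ ^ 2 + σ ^ 2) - log (σ ^ 2)) (gammaMeasure a r) :=
    hid.sub (integrable_const _)
  have hid'' : Integrable (fun ω => ω * (μ ^ 2 + σ ^ 2) - log (σ ^ 2) - 1) (gammaMeasure a r) :=
    hid'.sub (integrable_const _)
  rw [integral_congr_ae ((ae_pos_gammaMeasure a r).mono fun ω hω => gaussKL_eq hσ hω),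
    integral_const_mul, integral_sub hid'' (integrable_log_gammaMeasure ha hr),
    integral_sub hid' (integrable_const _), integral_sub hid (integrable_const _),
    integral_mul_const, integral_id_gammaMeasure ha hr]
  simp only [integral_const, probReal_univ, one_smul]

/-- Closed form of the sparsity loss `ℓ_sparse` (Eq. 29 of the paper): with
`q(S) = ⊗_{ij} N(μ_{s,ij}, σ_{s,ij}²)`, `p(s_{ij}|ω_{ij}) = N(0, ω_{ij}⁻¹)` and
`q(Ω) = ⊗_{ij} Gamma(α_{ij}, β_{ij})`, the expected KL `E_{q(Ω)}[KL(q(S) ‖ p(S|Ω))]` equals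
`½ Σ_{ij} [ (α_{ij}/β_{ij})(μ_{s,ij}² + σ_{s,ij}²) − log σ_{s,ij}² − 1 − E_{ij}[log ω] ]`. -/
theorem expected_kl_sparse_closed_form {h w : ℕ} (α β : Fin h → Fin w → ℝ)
    (hα : ∀ i j, 0 < α i j) (hβ : ∀ i j, 0 < β i j)
    (μs σs : Fin h → Fin w → ℝ) (hσ : ∀ i j, 0 < σs i j) :
    (∑ i, ∑ j, ∫ ω, gaussKL (μs i j) (σs i j) ω ∂gammaMeasure (α i j) (β i j)) =
      (1 / 2) * ∑ i, ∑ j,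
        ((α i j / β i j) * (μs i j ^ 2 + σs i j ^ 2) - Real.log (σs i j ^ 2) - 1
          - ∫ ω, Real.log ω ∂gammaMeasure (α i j) (β i j)) := by
  simp only [Finset.mul_sum]
  exact Finset.sum_congr rfl fun i _ => Finset.sum_congr rfl fun j _ =>
    integral_gaussKL_gammaMeasure (hα i j) (hβ i j) (hσ i j).ne'
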